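/- arXiv:2407.20185 — 8 statements merged into one kernel-verified Lean document; each statement's English description precedes it below -/
import Mathlib

section
/- Let s : Fin n → ℝ be a spin configuration with s i ∈ {−1, 1} for all i and let 0 ≤ k ≤ n. For every spin configuration t : Fin n → ℝ with t i ∈ {−1, 1} for all i and t i = s i for all i < k, one has ∑_{i < j} J i j · t i · t j ≥ ∑_{i < j < k} J i j · s i · s j − ∑_{i < j, j ≥ k} |J i j|. That is, the Kobe–Hartwig bound at a partial assignment is a valid lower bound on the energy of every completion of that partial assignment. -/
/-- The Kobe–Hartwig bound at a partial assignment of depth `k` is a valid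
lower bound on the Ising energy of every completion of that partial assignment. -/
theorem kobe_hartwig_bound_valid (n : ℕ) (J : Fin n → Fin n → ℝ)
    (s : Fin n → ℝ) (hs : ∀ i, s i = -1 ∨ s i = 1) (k : ℕ) (hk : k ≤ n)
    (t : Fin n → ℝ) (ht : ∀ i, t i = -1 ∨ t i = 1)
    (hagree : ∀ i : Fin n, (i : ℕ) < k → t i = s i) :
    (∑ i : Fin n, ∑ j : Fin n, if i < j then J i j * t i * t j else 0)
      ≥ (∑ i : Fin n, ∑ j : Fin n, if (i : ℕ) < (j : ℕ) ∧ (j : ℕ) < k then J i j * s i * s j else 0)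
        - ∑ i : Fin n, ∑ j : Fin n, if (i : ℕ) < (j : ℕ) ∧ k ≤ (j : ℕ) then |J i j| else 0 := by
  rw [ge_iff_le, sub_le_iff_le_add, ← Finset.sum_add_distrib]
  apply Finset.sum_le_sum
  intro i _
  rw [← Finset.sum_add_distrib]
  apply Finset.sum_le_sum
  intro j _
  by_cases h : (i : ℕ) < (j : ℕ)
  · by_cases hjk : (j : ℕ) < k
    · rw [if_pos ⟨h, hjk⟩, if_pos (show i < j from h),
        if_neg (fun hc => absurd hc.2 (by omega)),
        hagree i (h.trans hjk), hagree j hjk]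
      simp
    · rw [if_neg (fun hc => hjk hc.2), if_pos (show i < j from h),
        if_pos ⟨h, le_of_not_gt hjk⟩]
      have h1 : |t i| = 1 := by rcases ht i with h' | h' <;> simp [h']
      have h2 : |t j| = 1 := by rcases ht j with h' | h' <;> simp [h']
      have habs : |J i j * t i * t j| = |J i j| := by
        rw [abs_mul, abs_mul, h1, h2]; ring
      linarith [neg_abs_le (J i j * t i * t j), habs.ge]
  · rw [if_neg (fun hc => h hc.1), if_neg (fun hc : i < j => h hc),
      if_neg (fun hc => h hc.1)]
    simp
end

section
/- With B : ℕ → ℝ defined recursively from a spin configuration s by B(0) = −∑_{i < j} |J i j| and B(k+1) = B(k) + 2 · ∑_{i < k} |J i k| · [J i k · s i · s k > 0], the leaf value satisfies B(n) = ∑_{i < j} J i j · s i · s j; i.e., at a complete assignment the Kobe–Hartwig bound equals the exact Ising energy. -/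
private lemma two_abs_ind (x u v : ℝ) (hu : u = -1 ∨ u = 1) (hv : v = -1 ∨ v = 1) :
    2 * (|x| * (if x * u * v > 0 then (1:ℝ) else 0)) = x * u * v + |x| := by
  rcases hu with hu | hu <;> rcases hv with hv | hv <;> subst hu <;> subst hv <;>
    rcases abs_cases x with ⟨h1, h2⟩ <;> split_ifs <;> nlinarith

/-- At a complete assignment, the Kobe–Hartwig recursion yields the exact Ising
energy: `B n = ∑_{i<j} J i j * s i * s j`. -/
theorem kobe_hartwig_leaf_exact (n : ℕ) (J : Fin n → Fin n → ℝ)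
    (s : Fin n → ℝ) (hs : ∀ i, s i = -1 ∨ s i = 1) (B : ℕ → ℝ)
    (hB0 : B 0 = -∑ i : Fin n, ∑ j : Fin n, if i < j then |J i j| else 0)
    (hBsucc : ∀ k (hk : k < n),
      B (k + 1) = B k + 2 * ∑ i : Fin n, if (i : ℕ) < k then
        |J i ⟨k, hk⟩| * (if J i ⟨k, hk⟩ * s i * s ⟨k, hk⟩ > 0 then (1 : ℝ) else 0)
        else 0) :
    B n = ∑ i : Fin n, ∑ j : Fin n, if i < j then J i j * s i * s j else 0 := by
  set t : Fin n → Fin n → ℝ := fun i j => J i j * s i * s j + |J i j| with ht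
  have key : ∀ k, k ≤ n → B k = B 0 + ∑ i : Fin n, ∑ j : Fin n,
      if i < j ∧ (j : ℕ) < k then t i j else 0 := by
    intro k
    induction k with
    | zero => intro _; simp
    | succ k ih =>
      intro hk1
      have hk : k < n := hk1
      rw [hBsucc k hk, ih (le_of_lt hk)]
      have h2 : (2:ℝ) * ∑ i : Fin n, (if (i:ℕ) < k then
          |J i ⟨k, hk⟩| * (if J i ⟨k, hk⟩ * s i * s ⟨k, hk⟩ > 0 then (1:ℝ) else 0) else 0)
          = ∑ i : Fin n, (if i < (⟨k, hk⟩ : Fin n) then t i ⟨k, hk⟩ else 0) := by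
        rw [Finset.mul_sum]
        refine Finset.sum_congr rfl fun i _ => ?_
        by_cases h : (i : ℕ) < k
        · rw [if_pos h, if_pos (show i < (⟨k, hk⟩ : Fin n) from h), ht]
          exact two_abs_ind _ _ _ (hs i) (hs ⟨k, hk⟩)
        · rw [if_neg h, if_neg (show ¬ i < (⟨k, hk⟩ : Fin n) from h), mul_zero]
      have hsplit : ∀ i : Fin n,
          (∑ j : Fin n, if i < j ∧ (j:ℕ) < k + 1 then t i j else 0)
          = (∑ j : Fin n, if i < j ∧ (j:ℕ) < k then t i j else 0)
            + (if i < (⟨k, hk⟩ : Fin n) then t i ⟨k, hk⟩ else 0) := by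
        intro i
        have hp : ∀ j : Fin n, (if i < j ∧ (j:ℕ) < k + 1 then t i j else 0)
            = (if i < j ∧ (j:ℕ) < k then t i j else 0)
              + (if j = (⟨k, hk⟩ : Fin n) then (if i < j then t i j else 0) else 0) := by
          intro j
          rcases eq_or_ne j (⟨k, hk⟩ : Fin n) with rfl | hne
          · simp [Fin.lt_def]
          · have : (j : ℕ) ≠ k := fun h => hne (Fin.ext h)
            have h1 : ((j:ℕ) < k + 1) ↔ ((j:ℕ) < k) := by omega
            simp [hne, h1]
        rw [Finset.sum_congr rfl fun j _ => hp j, Finset.sum_add_distrib,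
          Finset.sum_ite_eq' Finset.univ (⟨k, hk⟩ : Fin n) (fun j => if i < j then t i j else 0)]
        simp
      rw [h2, Finset.sum_congr rfl fun i _ => hsplit i, Finset.sum_add_distrib]
      ring
  have hfin : ∀ (i j : Fin n), (i < j ∧ (j:ℕ) < n) ↔ i < j := fun i j => by
    simp [j.isLt]
  rw [key n le_rfl, hB0]
  simp only [hfin, ht]
  have : ∀ i : Fin n, ∑ j : Fin n, (if i < j then J i j * s i * s j + |J i j| else 0)
      = (∑ j : Fin n, if i < j then J i j * s i * s j else 0)
        + ∑ j : Fin n, if i < j then |J i j| else 0 := by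
    intro i
    rw [← Finset.sum_add_distrib]
    exact Finset.sum_congr rfl fun j _ => by split_ifs <;> ring
  rw [Finset.sum_congr rfl fun i _ => this i, Finset.sum_add_distrib]
  ring
end

section
/- Let s : Fin n → ℝ be a spin configuration with s i ∈ {−1, 1} for all i, let 0 ≤ k ≤ n, and let E_sub(k) denote the minimum over spin configurations u (u i ∈ {−1, 1} for all i) of ∑_{k ≤ i < j} J i j · u i · u j. Then for every spin configuration t with t i ∈ {−1, 1} for all i and t i = s i for all i < k, one has ∑_{i < j} J i j · t i · t j ≥ ∑_{i < j < k} J i j · s i · s j − ∑_{j ≥ k} |∑_{i < k} J i j · s i| + E_sub(k). That is, the Hartwig–Daske–Kobe bound is a valid lower bound on the energy of every completion of the partial assignment. -/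
/-- The Hartwig–Daske–Kobe bound is a valid lower bound on the Ising energy of
every completion of a partial assignment of depth `k`. -/
theorem hdk_bound_valid (n : ℕ) (J : Fin n → Fin n → ℝ)
    (s : Fin n → ℝ) (hs : ∀ i, s i = -1 ∨ s i = 1) (k : ℕ) (hk : k ≤ n)
    (t : Fin n → ℝ) (ht : ∀ i, t i = -1 ∨ t i = 1)
    (hagree : ∀ i : Fin n, (i : ℕ) < k → t i = s i) :
    (∑ i : Fin n, ∑ j : Fin n, if i < j then J i j * t i * t j else 0)
      ≥ (∑ i : Fin n, ∑ j : Fin n, if (i : ℕ) < (j : ℕ) ∧ (j : ℕ) < k then J i j * s i * s j else 0)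
        - (∑ j : Fin n, if k ≤ (j : ℕ) then |∑ i : Fin n, if (i : ℕ) < k then J i j * s i else 0| else 0)
        + sInf {v : ℝ | ∃ u : Fin n → ℝ, (∀ i, u i = -1 ∨ u i = 1) ∧
            v = ∑ i : Fin n, ∑ j : Fin n, if k ≤ (i : ℕ) ∧ i < j then J i j * u i * u j else 0} := by
  set E : (Fin n → ℝ) → ℝ := fun u =>
    ∑ i : Fin n, ∑ j : Fin n, if k ≤ (i : ℕ) ∧ i < j then J i j * u i * u j else 0 with hE
  set S : Set ℝ := {v : ℝ | ∃ u : Fin n → ℝ, (∀ i, u i = -1 ∨ u i = 1) ∧ v = E u} with hS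
  -- S is finite, hence bounded below
  have hfin : S.Finite := by
    have hsub : S ⊆ E '' (Set.univ.pi fun _ : Fin n => ({-1, 1} : Set ℝ)) := by
      rintro v ⟨u, hu, rfl⟩
      exact ⟨u, fun i _ => by rcases hu i with h | h <;> simp [h], rfl⟩
    exact Set.Finite.subset (Set.Finite.image _ (Set.Finite.pi fun _ =>
      (Set.finite_singleton (1:ℝ)).insert (-1))) hsub
  have hmem : E t ∈ S := ⟨t, ht, rfl⟩
  have hC : sInf S ≤ E t := csInf_le hfin.bddBelow hmem
  -- split the full sum
  have hpt : ∀ i j : Fin n, (if i < j then J i j * t i * t j else 0)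
      = (if (i : ℕ) < (j : ℕ) ∧ (j : ℕ) < k then J i j * t i * t j else 0)
        + (if (i : ℕ) < k ∧ k ≤ (j : ℕ) then J i j * t i * t j else 0)
        + (if k ≤ (i : ℕ) ∧ i < j then J i j * t i * t j else 0) := by
    intro i j
    simp only [Fin.lt_def]
    split_ifs <;> first | (exfalso; omega) | ring
  have hsplit : (∑ i : Fin n, ∑ j : Fin n, if i < j then J i j * t i * t j else 0)
      = (∑ i : Fin n, ∑ j : Fin n, if (i : ℕ) < (j : ℕ) ∧ (j : ℕ) < k then J i j * t i * t j else 0)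
        + (∑ i : Fin n, ∑ j : Fin n, if (i : ℕ) < k ∧ k ≤ (j : ℕ) then J i j * t i * t j else 0)
        + E t := by
    simp only [hpt, Finset.sum_add_distrib, hE]
  -- first block equals the s-block
  have hA : (∑ i : Fin n, ∑ j : Fin n, if (i : ℕ) < (j : ℕ) ∧ (j : ℕ) < k then J i j * t i * t j else 0)
      = ∑ i : Fin n, ∑ j : Fin n, if (i : ℕ) < (j : ℕ) ∧ (j : ℕ) < k then J i j * s i * s j else 0 := by
    refine Finset.sum_congr rfl fun i _ => Finset.sum_congr rfl fun j _ => ?_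
    by_cases h : (i : ℕ) < (j : ℕ) ∧ (j : ℕ) < k
    · rw [if_pos h, if_pos h, hagree j h.2, hagree i (h.1.trans h.2)]
    · rw [if_neg h, if_neg h]
  -- cross-term bound
  have hB : (∑ i : Fin n, ∑ j : Fin n, if (i : ℕ) < k ∧ k ≤ (j : ℕ) then J i j * t i * t j else 0)
      ≥ -(∑ j : Fin n, if k ≤ (j : ℕ) then |∑ i : Fin n, if (i : ℕ) < k then J i j * s i else 0| else 0) := by
    rw [Finset.sum_comm, ge_iff_le, ← Finset.sum_neg_distrib]
    refine Finset.sum_le_sum fun j _ => ?_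
    by_cases hj : k ≤ (j : ℕ)
    · rw [if_pos hj]
      have heq : (∑ i : Fin n, if (i : ℕ) < k ∧ k ≤ (j : ℕ) then J i j * t i * t j else 0)
          = (∑ i : Fin n, if (i : ℕ) < k then J i j * s i else 0) * t j := by
        rw [Finset.sum_mul]
        refine Finset.sum_congr rfl fun i _ => ?_
        by_cases hi : (i : ℕ) < k
        · rw [if_pos ⟨hi, hj⟩, if_pos hi, hagree i hi]
        · rw [if_neg (by tauto), if_neg hi, zero_mul]
      rw [heq]
      set x := ∑ i : Fin n, if (i : ℕ) < k then J i j * s i else 0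
      rcases ht j with h | h <;> rw [h]
      · rw [mul_neg_one]; linarith [le_abs_self x]
      · rw [mul_one]; linarith [neg_abs_le x]
    · simp only [if_neg hj]
      have : (∑ i : Fin n, if (i : ℕ) < k ∧ k ≤ (j : ℕ) then J i j * t i * t j else 0) = 0 := by
        refine Finset.sum_eq_zero fun i _ => if_neg (by tauto)
      rw [this, neg_zero]
  rw [hsplit, hA]
  linarith
end

section
/- Let s : Fin n → ℝ be a spin configuration with s i ∈ {−1, 1} for all i, let 0 ≤ k ≤ n, and let B ∈ ℝ be any number with B ≤ E_sub(k), where E_sub(k) is the minimum over spin configurations u of ∑_{k ≤ i < j} J i j · u i · u j. Then for every spin configuration t with t i ∈ {−1, 1} for all i and t i = s i for all i < k, one has ∑_{i < j} J i j · t i · t j ≥ ∑_{i < j < k} J i j · s i · s j − ∑_{j ≥ k} |∑_{i < k} J i j · s i| + B. In particular, taking B = −∑_{k ≤ i < j} |J i j| (the Kobe–Hartwig root bound of the subproblem) yields a valid lower bound without requiring the subproblem to be solved. -/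
open Finset

private lemma hdk_term_split (n k : ℕ) (f : Fin n → Fin n → ℝ) :
    (∑ i : Fin n, ∑ j : Fin n, if i < j then f i j else 0)
    = (∑ i : Fin n, ∑ j : Fin n, if (i:ℕ) < (j:ℕ) ∧ (j:ℕ) < k then f i j else 0)
      + (∑ i : Fin n, ∑ j : Fin n, if (i:ℕ) < k ∧ k ≤ (j:ℕ) ∧ (i:ℕ) < (j:ℕ) then f i j else 0)
      + (∑ i : Fin n, ∑ j : Fin n, if k ≤ (i:ℕ) ∧ i < j then f i j else 0) := by
  rw [← Finset.sum_add_distrib, ← Finset.sum_add_distrib]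
  refine Finset.sum_congr rfl fun i _ => ?_
  rw [← Finset.sum_add_distrib, ← Finset.sum_add_distrib]
  refine Finset.sum_congr rfl fun j _ => ?_
  simp only [Fin.lt_def]
  split_ifs <;> first | (exfalso; omega) | ring

private lemma hdk_tail_ge (n k : ℕ) (J : Fin n → Fin n → ℝ) (u : Fin n → ℝ)
    (hu : ∀ i, u i = -1 ∨ u i = 1) :
    -(∑ i : Fin n, ∑ j : Fin n, if k ≤ (i:ℕ) ∧ i < j then |J i j| else 0)
      ≤ ∑ i : Fin n, ∑ j : Fin n, if k ≤ (i:ℕ) ∧ i < j then J i j * u i * u j else 0 := by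
  calc -(∑ i : Fin n, ∑ j : Fin n, if k ≤ (i:ℕ) ∧ i < j then |J i j| else 0)
      = ∑ i : Fin n, ∑ j : Fin n, -(if k ≤ (i:ℕ) ∧ i < j then |J i j| else 0) := by
        simp [Finset.sum_neg_distrib]
    _ ≤ _ := by
        refine Finset.sum_le_sum fun i _ => Finset.sum_le_sum fun j _ => ?_
        split_ifs with h
        · have habs : |J i j * u i * u j| = |J i j| := by
            rcases hu i with h1 | h1 <;> rcases hu j with h2 | h2 <;>
              rw [h1, h2] <;> simp [abs_mul]
          calc -|J i j| = -|J i j * u i * u j| := by rw [habs]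
            _ ≤ J i j * u i * u j := neg_abs_le _
        · simp

private lemma hdk_middle_ge (n k : ℕ) (J : Fin n → Fin n → ℝ) (s t : Fin n → ℝ)
    (ht : ∀ i, t i = -1 ∨ t i = 1) :
    -(∑ j : Fin n, if k ≤ (j:ℕ) then |∑ i : Fin n, if (i:ℕ) < k then J i j * s i else 0| else 0)
    ≤ ∑ i : Fin n, ∑ j : Fin n,
        if (i:ℕ) < k ∧ k ≤ (j:ℕ) ∧ (i:ℕ) < (j:ℕ) then J i j * s i * t j else 0 := by
  rw [Finset.sum_comm]
  calc -(∑ j : Fin n, if k ≤ (j:ℕ) then |∑ i : Fin n, if (i:ℕ) < k then J i j * s i else 0| else 0)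
      = ∑ j : Fin n, -(if k ≤ (j:ℕ) then |∑ i : Fin n, if (i:ℕ) < k then J i j * s i else 0| else 0) := by
        simp
    _ ≤ _ := by
      refine Finset.sum_le_sum fun j _ => ?_
      by_cases hj : k ≤ (j:ℕ)
      · have hin : (∑ i : Fin n, if (i:ℕ) < k ∧ k ≤ (j:ℕ) ∧ (i:ℕ) < (j:ℕ) then J i j * s i * t j else 0)
            = (∑ i : Fin n, if (i:ℕ) < k then J i j * s i else 0) * t j := by
          rw [Finset.sum_mul]
          refine Finset.sum_congr rfl fun i _ => ?_
          split_ifs <;> first | (exfalso; omega) | ring | skip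
        rw [hin, if_pos hj]
        have habs : |(∑ i : Fin n, if (i:ℕ) < k then J i j * s i else 0) * t j|
            = |∑ i : Fin n, if (i:ℕ) < k then J i j * s i else 0| := by
          rcases ht j with h | h <;> rw [h] <;> simp [abs_mul]
        calc -(|∑ i : Fin n, if (i:ℕ) < k then J i j * s i else 0|)
            = -|(∑ i : Fin n, if (i:ℕ) < k then J i j * s i else 0) * t j| := by rw [habs]
          _ ≤ _ := neg_abs_le _
      · rw [if_neg hj]
        simp only [neg_zero]
        refine Finset.sum_nonneg fun i _ => ?_
        split_ifs with h
        · exact absurd h.2.1 hj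
        · exact le_refl 0

private lemma hdk_main (n : ℕ) (J : Fin n → Fin n → ℝ)
    (s : Fin n → ℝ) (k : ℕ) (B : ℝ)
    (hB : B ≤ sInf {v : ℝ | ∃ u : Fin n → ℝ, (∀ i, u i = -1 ∨ u i = 1) ∧
        v = ∑ i : Fin n, ∑ j : Fin n, if k ≤ (i : ℕ) ∧ i < j then J i j * u i * u j else 0}) :
    ∀ t : Fin n → ℝ, (∀ i, t i = -1 ∨ t i = 1) →
      (∀ i : Fin n, (i : ℕ) < k → t i = s i) →
      (∑ i : Fin n, ∑ j : Fin n, if i < j then J i j * t i * t j else 0)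
        ≥ (∑ i : Fin n, ∑ j : Fin n, if (i : ℕ) < (j : ℕ) ∧ (j : ℕ) < k then J i j * s i * s j else 0)
          - (∑ j : Fin n, if k ≤ (j : ℕ) then |∑ i : Fin n, if (i : ℕ) < k then J i j * s i else 0| else 0)
          + B := by
  intro t ht hts
  rw [hdk_term_split n k (fun i j => J i j * t i * t j)]
  have h1 : (∑ i : Fin n, ∑ j : Fin n, if (i:ℕ) < (j:ℕ) ∧ (j:ℕ) < k then J i j * t i * t j else 0)
      = ∑ i : Fin n, ∑ j : Fin n, if (i:ℕ) < (j:ℕ) ∧ (j:ℕ) < k then J i j * s i * s j else 0 := by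
    refine Finset.sum_congr rfl fun i _ => Finset.sum_congr rfl fun j _ => ?_
    split_ifs with h
    · rw [hts i (by omega), hts j h.2]
    · rfl
  have h2 : (∑ i : Fin n, ∑ j : Fin n,
        if (i:ℕ) < k ∧ k ≤ (j:ℕ) ∧ (i:ℕ) < (j:ℕ) then J i j * t i * t j else 0)
      = ∑ i : Fin n, ∑ j : Fin n,
        if (i:ℕ) < k ∧ k ≤ (j:ℕ) ∧ (i:ℕ) < (j:ℕ) then J i j * s i * t j else 0 := by
    refine Finset.sum_congr rfl fun i _ => Finset.sum_congr rfl fun j _ => ?_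
    split_ifs with h
    · rw [hts i h.1]
    · rfl
  have hbdd : BddBelow {v : ℝ | ∃ u : Fin n → ℝ, (∀ i, u i = -1 ∨ u i = 1) ∧
      v = ∑ i : Fin n, ∑ j : Fin n, if k ≤ (i : ℕ) ∧ i < j then J i j * u i * u j else 0} := by
    refine ⟨-(∑ i : Fin n, ∑ j : Fin n, if k ≤ (i:ℕ) ∧ i < j then |J i j| else 0), ?_⟩
    rintro v ⟨u, hu, rfl⟩
    exact hdk_tail_ge n k J u hu
  have h3 : B ≤ ∑ i : Fin n, ∑ j : Fin n, if k ≤ (i:ℕ) ∧ i < j then J i j * t i * t j else 0 :=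
    hB.trans (csInf_le hbdd ⟨t, ht, rfl⟩)
  rw [h1, h2, sub_eq_add_neg]
  exact add_le_add (add_le_add le_rfl (hdk_middle_ge n k J s t ht)) h3

/-- Replacing the subproblem optimum in the Hartwig–Daske–Kobe bound by any
lower bound `B` on it still yields a valid lower bound on the energy of every
completion; in particular one may take the Kobe–Hartwig root bound of the
subproblem, `B = -∑_{k ≤ i < j} |J i j|`. -/
theorem hdk_bound_with_subproblem_lower_bound (n : ℕ) (J : Fin n → Fin n → ℝ)
    (s : Fin n → ℝ) (hs : ∀ i, s i = -1 ∨ s i = 1) (k : ℕ) (hk : k ≤ n)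
    (B : ℝ)
    (hB : B ≤ sInf {v : ℝ | ∃ u : Fin n → ℝ, (∀ i, u i = -1 ∨ u i = 1) ∧
        v = ∑ i : Fin n, ∑ j : Fin n, if k ≤ (i : ℕ) ∧ i < j then J i j * u i * u j else 0}) :
    (∀ t : Fin n → ℝ, (∀ i, t i = -1 ∨ t i = 1) →
      (∀ i : Fin n, (i : ℕ) < k → t i = s i) →
      (∑ i : Fin n, ∑ j : Fin n, if i < j then J i j * t i * t j else 0)
        ≥ (∑ i : Fin n, ∑ j : Fin n, if (i : ℕ) < (j : ℕ) ∧ (j : ℕ) < k then J i j * s i * s j else 0)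
          - (∑ j : Fin n, if k ≤ (j : ℕ) then |∑ i : Fin n, if (i : ℕ) < k then J i j * s i else 0| else 0)
          + B) ∧
    (∀ t : Fin n → ℝ, (∀ i, t i = -1 ∨ t i = 1) →
      (∀ i : Fin n, (i : ℕ) < k → t i = s i) →
      (∑ i : Fin n, ∑ j : Fin n, if i < j then J i j * t i * t j else 0)
        ≥ (∑ i : Fin n, ∑ j : Fin n, if (i : ℕ) < (j : ℕ) ∧ (j : ℕ) < k then J i j * s i * s j else 0)
          - (∑ j : Fin n, if k ≤ (j : ℕ) then |∑ i : Fin n, if (i : ℕ) < k then J i j * s i else 0| else 0)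
          + (-∑ i : Fin n, ∑ j : Fin n, if k ≤ (i : ℕ) ∧ i < j then |J i j| else 0)) := by
  refine ⟨hdk_main n J s k B hB, hdk_main n J s k _ ?_⟩
  refine le_csInf ⟨_, fun _ => 1, fun _ => Or.inr rfl, rfl⟩ ?_
  rintro v ⟨u, hu, rfl⟩
  exact hdk_tail_ge n k J u hu
end

section
/- Let s : Fin n → ℝ be a spin configuration with s i ∈ {−1, 1} for all i and let 0 ≤ k ≤ n. Then the Hartwig–Daske–Kobe bound dominates the Kobe–Hartwig bound: ∑_{i < j < k} J i j · s i · s j − ∑_{j ≥ k} |∑_{i < k} J i j · s i| + E_sub(k) ≥ ∑_{i < j < k} J i j · s i · s j − ∑_{i < j, j ≥ k} |J i j|, where E_sub(k) is the minimum over spin configurations u of ∑_{k ≤ i < j} J i j · u i · u j. Equivalently, ∑_{j ≥ k} |∑_{i < k} J i j · s i| ≤ ∑_{j ≥ k} ∑_{i < k} |J i j| and E_sub(k) ≥ −∑_{k ≤ i < j} |J i j|. -/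
/-- The Hartwig–Daske–Kobe bound dominates the Kobe–Hartwig bound, together
with the two constituent inequalities. -/
theorem hdk_dominates_kh (n : ℕ) (J : Fin n → Fin n → ℝ)
    (s : Fin n → ℝ) (hs : ∀ i, s i = -1 ∨ s i = 1) (k : ℕ) (hk : k ≤ n) :
    ((∑ i : Fin n, ∑ j : Fin n, if (i : ℕ) < (j : ℕ) ∧ (j : ℕ) < k then J i j * s i * s j else 0)
        - (∑ j : Fin n, if k ≤ (j : ℕ) then |∑ i : Fin n, if (i : ℕ) < k then J i j * s i else 0| else 0)
        + sInf {v : ℝ | ∃ u : Fin n → ℝ, (∀ i, u i = -1 ∨ u i = 1) ∧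
            v = ∑ i : Fin n, ∑ j : Fin n, if k ≤ (i : ℕ) ∧ i < j then J i j * u i * u j else 0}
      ≥ (∑ i : Fin n, ∑ j : Fin n, if (i : ℕ) < (j : ℕ) ∧ (j : ℕ) < k then J i j * s i * s j else 0)
        - ∑ i : Fin n, ∑ j : Fin n, if (i : ℕ) < (j : ℕ) ∧ k ≤ (j : ℕ) then |J i j| else 0) ∧
    ((∑ j : Fin n, if k ≤ (j : ℕ) then |∑ i : Fin n, if (i : ℕ) < k then J i j * s i else 0| else 0)
      ≤ ∑ j : Fin n, if k ≤ (j : ℕ) then (∑ i : Fin n, if (i : ℕ) < k then |J i j| else 0) else 0) ∧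
    (sInf {v : ℝ | ∃ u : Fin n → ℝ, (∀ i, u i = -1 ∨ u i = 1) ∧
        v = ∑ i : Fin n, ∑ j : Fin n, if k ≤ (i : ℕ) ∧ i < j then J i j * u i * u j else 0}
      ≥ -∑ i : Fin n, ∑ j : Fin n, if k ≤ (i : ℕ) ∧ i < j then |J i j| else 0) := by
  have habs : ∀ (u : Fin n → ℝ), (∀ i, u i = -1 ∨ u i = 1) → ∀ i, |u i| = 1 := by
    intro u hu i; rcases hu i with h | h <;> simp [h]
  -- part 2
  have h2 : (∑ j : Fin n, if k ≤ (j : ℕ) then |∑ i : Fin n, if (i : ℕ) < k then J i j * s i else 0| else 0)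
      ≤ ∑ j : Fin n, if k ≤ (j : ℕ) then (∑ i : Fin n, if (i : ℕ) < k then |J i j| else 0) else 0 := by
    apply Finset.sum_le_sum
    intro j _
    split_ifs with h
    · refine (Finset.abs_sum_le_sum_abs _ _).trans (Finset.sum_le_sum fun i _ => ?_)
      split_ifs with h'
      · rw [abs_mul, habs s hs i, mul_one]
      · simp
    · exact le_rfl
  -- part 3
  have h3 : sInf {v : ℝ | ∃ u : Fin n → ℝ, (∀ i, u i = -1 ∨ u i = 1) ∧
        v = ∑ i : Fin n, ∑ j : Fin n, if k ≤ (i : ℕ) ∧ i < j then J i j * u i * u j else 0}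
      ≥ -∑ i : Fin n, ∑ j : Fin n, if k ≤ (i : ℕ) ∧ i < j then |J i j| else 0 := by
    apply le_csInf
    · exact ⟨_, fun _ => (1 : ℝ), fun i => Or.inr rfl, rfl⟩
    · rintro v ⟨u, hu, rfl⟩
      rw [neg_le, ← Finset.sum_neg_distrib]
      apply Finset.sum_le_sum
      intro i _
      rw [← Finset.sum_neg_distrib]
      apply Finset.sum_le_sum
      intro j _
      split_ifs with h
      · have : |J i j * u i * u j| = |J i j| := by
          rw [abs_mul, abs_mul, habs u hu i, habs u hu j]; ring
        linarith [neg_abs_le (J i j * u i * u j), this.ge]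
      · simp
  -- splitting the |J| sum
  have hsplit : (∑ i : Fin n, ∑ j : Fin n, if (i : ℕ) < (j : ℕ) ∧ k ≤ (j : ℕ) then |J i j| else 0)
      = (∑ j : Fin n, if k ≤ (j : ℕ) then (∑ i : Fin n, if (i : ℕ) < k then |J i j| else 0) else 0)
        + ∑ i : Fin n, ∑ j : Fin n, if k ≤ (i : ℕ) ∧ i < j then |J i j| else 0 := by
    have : (∑ j : Fin n, if k ≤ (j : ℕ) then (∑ i : Fin n, if (i : ℕ) < k then |J i j| else 0) else 0)
        = ∑ i : Fin n, ∑ j : Fin n, if (i : ℕ) < k ∧ k ≤ (j : ℕ) then |J i j| else 0 := by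
      rw [Finset.sum_comm]
      apply Finset.sum_congr rfl
      intro j _
      split_ifs with h
      · exact Finset.sum_congr rfl fun i _ => by simp [h]
      · symm; apply Finset.sum_eq_zero; intro i _; simp [h]
    rw [this, ← Finset.sum_add_distrib]
    apply Finset.sum_congr rfl
    intro i _
    rw [← Finset.sum_add_distrib]
    apply Finset.sum_congr rfl
    intro j _
    simp only [Fin.lt_def]
    split_ifs
    any_goals ring
    all_goals exfalso; omega
  refine ⟨?_, h2, h3⟩
  linarith [h2, h3, hsplit.ge]
end

section
/- Let 0 ≤ k ≤ n and let B ∈ ℝ be any number with B ≤ E_sub(k), where E_sub(k) is the minimum over spin configurations u of ∑_{k ≤ i < j} J i j · u i · u j. Then the full-problem optimum E_n = min over spin configurations s of ∑_{i < j} J i j · s i · s j satisfies the extrapolated lower bound E_n ≥ −∑_{i < j} |J i j| + ∑_{k ≤ i, i < j} |J i j| + B (equivalently, E_n ≥ −∑_{i < k, i < j} |J i j| + B). -/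
/-- Extrapolating a lower bound on the subproblem optimum to a valid lower
bound on the full-problem optimum `E_n`. -/
theorem extrapolated_lower_bound (n : ℕ) (J : Fin n → Fin n → ℝ)
    (k : ℕ) (hk : k ≤ n) (B : ℝ)
    (hB : B ≤ sInf {v : ℝ | ∃ u : Fin n → ℝ, (∀ i, u i = -1 ∨ u i = 1) ∧
        v = ∑ i : Fin n, ∑ j : Fin n, if k ≤ (i : ℕ) ∧ i < j then J i j * u i * u j else 0}) :
    (sInf {v : ℝ | ∃ s : Fin n → ℝ, (∀ i, s i = -1 ∨ s i = 1) ∧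
        v = ∑ i : Fin n, ∑ j : Fin n, if i < j then J i j * s i * s j else 0}
      ≥ (-∑ i : Fin n, ∑ j : Fin n, if i < j then |J i j| else 0)
        + (∑ i : Fin n, ∑ j : Fin n, if k ≤ (i : ℕ) ∧ i < j then |J i j| else 0) + B) ∧
    (sInf {v : ℝ | ∃ s : Fin n → ℝ, (∀ i, s i = -1 ∨ s i = 1) ∧
        v = ∑ i : Fin n, ∑ j : Fin n, if i < j then J i j * s i * s j else 0}
      ≥ (-∑ i : Fin n, ∑ j : Fin n, if (i : ℕ) < k ∧ i < j then |J i j| else 0) + B) := by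
  have habs : ∀ (u : Fin n → ℝ), (∀ i, u i = -1 ∨ u i = 1) → ∀ i, |u i| = 1 := by
    intro u hu i; rcases hu i with h | h <;> simp [h]
  have hterm : ∀ (u : Fin n → ℝ), (∀ i, u i = -1 ∨ u i = 1) → ∀ i j : Fin n,
      -|J i j| ≤ J i j * u i * u j := by
    intro u hu i j
    have h2 : |J i j * u i * u j| = |J i j| := by
      rw [abs_mul, abs_mul, habs u hu i, habs u hu j]; ring
    calc -|J i j| = -|J i j * u i * u j| := by rw [h2]
      _ ≤ _ := neg_abs_le _
  -- subproblem set bounded below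
  have hbdd : BddBelow {v : ℝ | ∃ u : Fin n → ℝ, (∀ i, u i = -1 ∨ u i = 1) ∧
      v = ∑ i : Fin n, ∑ j : Fin n, if k ≤ (i : ℕ) ∧ i < j then J i j * u i * u j else 0} := by
    refine ⟨-∑ i : Fin n, ∑ j : Fin n, if k ≤ (i : ℕ) ∧ i < j then |J i j| else 0, ?_⟩
    rintro v ⟨u, hu, rfl⟩
    have : ∀ i j : Fin n,
        -(if k ≤ (i : ℕ) ∧ i < j then |J i j| else 0)
          ≤ (if k ≤ (i : ℕ) ∧ i < j then J i j * u i * u j else 0) := by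
      intro i j; split_ifs
      · exact hterm u hu i j
      · simp
    calc -∑ i : Fin n, ∑ j : Fin n, (if k ≤ (i : ℕ) ∧ i < j then |J i j| else 0)
        = ∑ i : Fin n, ∑ j : Fin n, -(if k ≤ (i : ℕ) ∧ i < j then |J i j| else 0) := by
          simp [Finset.sum_neg_distrib]
      _ ≤ _ := Finset.sum_le_sum (fun i _ => Finset.sum_le_sum (fun j _ => this i j))
  -- key: every element of the full set satisfies the second bound
  have key : ∀ v ∈ {v : ℝ | ∃ s : Fin n → ℝ, (∀ i, s i = -1 ∨ s i = 1) ∧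
      v = ∑ i : Fin n, ∑ j : Fin n, if i < j then J i j * s i * s j else 0},
      (-∑ i : Fin n, ∑ j : Fin n, if (i : ℕ) < k ∧ i < j then |J i j| else 0) + B ≤ v := by
    rintro v ⟨s, hs, rfl⟩
    have hsplit : (∑ i : Fin n, ∑ j : Fin n, if i < j then J i j * s i * s j else 0)
        = (∑ i : Fin n, ∑ j : Fin n, if (i : ℕ) < k ∧ i < j then J i j * s i * s j else 0)
          + (∑ i : Fin n, ∑ j : Fin n, if k ≤ (i : ℕ) ∧ i < j then J i j * s i * s j else 0) := by
      rw [← Finset.sum_add_distrib]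
      refine Finset.sum_congr rfl fun i _ => ?_
      rw [← Finset.sum_add_distrib]
      refine Finset.sum_congr rfl fun j _ => ?_
      rcases Nat.lt_or_ge (i:ℕ) k with h | h
      · have h' : ¬ k ≤ (i:ℕ) := by omega
        by_cases hij : i < j <;> simp [h, h', hij]
      · have h' : ¬ (i:ℕ) < k := by omega
        by_cases hij : i < j <;> simp [h, h', hij]
    have h1 : B ≤ ∑ i : Fin n, ∑ j : Fin n,
        if k ≤ (i : ℕ) ∧ i < j then J i j * s i * s j else 0 :=
      le_trans hB (csInf_le hbdd ⟨s, hs, rfl⟩)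
    have h2 : (-∑ i : Fin n, ∑ j : Fin n, if (i : ℕ) < k ∧ i < j then |J i j| else 0)
        ≤ ∑ i : Fin n, ∑ j : Fin n, if (i : ℕ) < k ∧ i < j then J i j * s i * s j else 0 := by
      have : ∀ i j : Fin n,
          -(if (i : ℕ) < k ∧ i < j then |J i j| else 0)
            ≤ (if (i : ℕ) < k ∧ i < j then J i j * s i * s j else 0) := by
        intro i j; split_ifs
        · exact hterm s hs i j
        · simp
      calc -∑ i : Fin n, ∑ j : Fin n, (if (i : ℕ) < k ∧ i < j then |J i j| else 0)
          = ∑ i : Fin n, ∑ j : Fin n, -(if (i : ℕ) < k ∧ i < j then |J i j| else 0) := by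
            simp [Finset.sum_neg_distrib]
        _ ≤ _ := Finset.sum_le_sum (fun i _ => Finset.sum_le_sum (fun j _ => this i j))
    linarith
  have hne : {v : ℝ | ∃ s : Fin n → ℝ, (∀ i, s i = -1 ∨ s i = 1) ∧
      v = ∑ i : Fin n, ∑ j : Fin n, if i < j then J i j * s i * s j else 0}.Nonempty :=
    ⟨_, fun _ => 1, fun i => Or.inr rfl, rfl⟩
  have h2nd : sInf {v : ℝ | ∃ s : Fin n → ℝ, (∀ i, s i = -1 ∨ s i = 1) ∧
      v = ∑ i : Fin n, ∑ j : Fin n, if i < j then J i j * s i * s j else 0}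
      ≥ (-∑ i : Fin n, ∑ j : Fin n, if (i : ℕ) < k ∧ i < j then |J i j| else 0) + B :=
    le_csInf hne key
  have heq : (∑ i : Fin n, ∑ j : Fin n, if i < j then |J i j| else 0)
      = (∑ i : Fin n, ∑ j : Fin n, if (i : ℕ) < k ∧ i < j then |J i j| else 0)
        + (∑ i : Fin n, ∑ j : Fin n, if k ≤ (i : ℕ) ∧ i < j then |J i j| else 0) := by
    rw [← Finset.sum_add_distrib]
    refine Finset.sum_congr rfl fun i _ => ?_
    rw [← Finset.sum_add_distrib]
    refine Finset.sum_congr rfl fun j _ => ?_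
    rcases Nat.lt_or_ge (i:ℕ) k with h | h
    · have h' : ¬ k ≤ (i:ℕ) := by omega
      by_cases hij : i < j <;> simp [h, h', hij]
    · have h' : ¬ (i:ℕ) < k := by omega
      by_cases hij : i < j <;> simp [h, h', hij]
  constructor
  · linarith
  · exact h2nd
end

section
/- (HDK bound with external fields, fields removed from subproblems.) Let J : Fin n → Fin n → ℝ, h : Fin n → ℝ, let s be a spin configuration, let 0 ≤ k ≤ n, and let E_sub(k) be the minimum over spin configurations u of ∑_{k ≤ i < j} J i j · u i · u j (no field term). Then for every spin configuration t with t i = s i for all i < k, one has ∑_{i < j} J i j · t i · t j + ∑_i h i · t i ≥ ∑_{i < j < k} J i j · s i · s j + ∑_{i < k} h i · s i − ∑_{j ≥ k} |h j + ∑_{i < k} J i j · s i| + E_sub(k). -/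
/-- The Hartwig–Daske–Kobe bound with external fields, where the fields are
removed from the lower-dimensional subproblems. -/
theorem hdk_bound_with_field_removed (n : ℕ) (J : Fin n → Fin n → ℝ)
    (h : Fin n → ℝ) (s : Fin n → ℝ) (hs : ∀ i, s i = -1 ∨ s i = 1)
    (k : ℕ) (hk : k ≤ n)
    (t : Fin n → ℝ) (ht : ∀ i, t i = -1 ∨ t i = 1)
    (hagree : ∀ i : Fin n, (i : ℕ) < k → t i = s i) :
    (∑ i : Fin n, ∑ j : Fin n, if i < j then J i j * t i * t j else 0) + ∑ i : Fin n, h i * t i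
      ≥ (∑ i : Fin n, ∑ j : Fin n, if (i : ℕ) < (j : ℕ) ∧ (j : ℕ) < k then J i j * s i * s j else 0)
        + (∑ i : Fin n, if (i : ℕ) < k then h i * s i else 0)
        - (∑ j : Fin n, if k ≤ (j : ℕ) then |h j + ∑ i : Fin n, if (i : ℕ) < k then J i j * s i else 0| else 0)
        + sInf {v : ℝ | ∃ u : Fin n → ℝ, (∀ i, u i = -1 ∨ u i = 1) ∧
            v = ∑ i : Fin n, ∑ j : Fin n, if k ≤ (i : ℕ) ∧ i < j then J i j * u i * u j else 0} := by
  set S := {v : ℝ | ∃ u : Fin n → ℝ, (∀ i, u i = -1 ∨ u i = 1) ∧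
      v = ∑ i : Fin n, ∑ j : Fin n, if k ≤ (i : ℕ) ∧ i < j then J i j * u i * u j else 0}
  -- the tail value of t
  set T3 := ∑ i : Fin n, ∑ j : Fin n, if k ≤ (i : ℕ) ∧ i < j then J i j * t i * t j else 0 with hT3
  have hmem : T3 ∈ S := ⟨t, ht, rfl⟩
  have hbdd : BddBelow S := by
    refine ⟨-∑ i : Fin n, ∑ j : Fin n, |J i j|, ?_⟩
    rintro v ⟨u, hu, rfl⟩
    rw [← Finset.sum_neg_distrib]
    refine Finset.sum_le_sum fun i _ => ?_
    rw [← Finset.sum_neg_distrib]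
    refine Finset.sum_le_sum fun j _ => ?_
    split_ifs with hij
    · have : |J i j * u i * u j| = |J i j| := by
        rw [abs_mul, abs_mul]
        rcases hu i with h1 | h1 <;> rcases hu j with h2 | h2 <;> rw [h1, h2] <;> simp
      calc -|J i j| = -|J i j * u i * u j| := by rw [this]
        _ ≤ J i j * u i * u j := neg_abs_le _
    · simpa using abs_nonneg (J i j)
  have hinf : sInf S ≤ T3 := csInf_le hbdd hmem
  -- split the pair sum
  have hsplit : (∑ i : Fin n, ∑ j : Fin n, if i < j then J i j * t i * t j else 0)
      = (∑ i : Fin n, ∑ j : Fin n, if (i : ℕ) < (j : ℕ) ∧ (j : ℕ) < k then J i j * t i * t j else 0)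
      + (∑ i : Fin n, ∑ j : Fin n, if (i : ℕ) < k ∧ k ≤ (j : ℕ) then J i j * t i * t j else 0)
      + T3 := by
    rw [hT3, ← Finset.sum_add_distrib, ← Finset.sum_add_distrib]
    refine Finset.sum_congr rfl fun i _ => ?_
    rw [← Finset.sum_add_distrib, ← Finset.sum_add_distrib]
    refine Finset.sum_congr rfl fun j _ => ?_
    simp only [Fin.lt_def]
    split_ifs <;> first | omega | ring
  -- the first block agrees with s
  have hT1 : (∑ i : Fin n, ∑ j : Fin n, if (i : ℕ) < (j : ℕ) ∧ (j : ℕ) < k then J i j * t i * t j else 0)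
      = ∑ i : Fin n, ∑ j : Fin n, if (i : ℕ) < (j : ℕ) ∧ (j : ℕ) < k then J i j * s i * s j else 0 := by
    refine Finset.sum_congr rfl fun i _ => Finset.sum_congr rfl fun j _ => ?_
    by_cases hij : (i : ℕ) < (j : ℕ) ∧ (j : ℕ) < k
    · rw [if_pos hij, if_pos hij, hagree i (lt_trans hij.1 hij.2), hagree j hij.2]
    · rw [if_neg hij, if_neg hij]
  -- split the field sum
  have hfield : (∑ i : Fin n, h i * t i)
      = (∑ i : Fin n, if (i : ℕ) < k then h i * s i else 0)
      + (∑ i : Fin n, if k ≤ (i : ℕ) then h i * t i else 0) := by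
    rw [← Finset.sum_add_distrib]
    refine Finset.sum_congr rfl fun i _ => ?_
    by_cases hi : (i : ℕ) < k
    · rw [if_pos hi, if_neg (by omega), hagree i hi]; ring
    · rw [if_neg hi, if_pos (by omega)]; ring
  -- the cross block rewritten per-column
  have hT2 : (∑ i : Fin n, ∑ j : Fin n, if (i : ℕ) < k ∧ k ≤ (j : ℕ) then J i j * t i * t j else 0)
      = ∑ j : Fin n, if k ≤ (j : ℕ) then (∑ i : Fin n, if (i : ℕ) < k then J i j * s i else 0) * t j else 0 := by
    rw [Finset.sum_comm]
    refine Finset.sum_congr rfl fun j _ => ?_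
    by_cases hj : k ≤ (j : ℕ)
    · rw [if_pos hj, Finset.sum_mul]
      refine Finset.sum_congr rfl fun i _ => ?_
      by_cases hi : (i : ℕ) < k
      · rw [if_pos ⟨hi, hj⟩, if_pos hi, hagree i hi]
      · rw [if_neg (by tauto), if_neg hi]; ring
    · rw [if_neg hj]
      refine Finset.sum_eq_zero fun i _ => ?_
      rw [if_neg (by tauto)]
  -- combine cross block with high field, bound by abs sum
  have hcombine : (∑ j : Fin n, if k ≤ (j : ℕ) then (∑ i : Fin n, if (i : ℕ) < k then J i j * s i else 0) * t j else 0)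
      + (∑ j : Fin n, if k ≤ (j : ℕ) then h j * t j else 0)
      ≥ -(∑ j : Fin n, if k ≤ (j : ℕ) then |h j + ∑ i : Fin n, if (i : ℕ) < k then J i j * s i else 0| else 0) := by
    rw [← Finset.sum_add_distrib, ← Finset.sum_neg_distrib]
    refine Finset.sum_le_sum fun j _ => ?_
    set c := ∑ i : Fin n, if (i : ℕ) < k then J i j * s i else 0 with hc
    by_cases hj : k ≤ (j : ℕ)
    · rw [if_pos hj, if_pos hj, if_pos hj]
      have habs1 := le_abs_self (h j + c)
      have habs2 := neg_abs_le (h j + c)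
      rcases ht j with h1 | h1 <;> rw [h1] <;> nlinarith
    · simp [hj]
  rw [hsplit, hT1, hfield]
  linarith
end

section
/- (HDK bound with external fields, fields kept in subproblems.) Let J : Fin n → Fin n → ℝ, h : Fin n → ℝ, let s be a spin configuration, let 0 ≤ k ≤ n, and let E'_sub(k) be the minimum over spin configurations u of ∑_{k ≤ i < j} J i j · u i · u j + ∑_{j ≥ k} h j · u j (subproblem including fields). Then for every spin configuration t with t i = s i for all i < k, one has ∑_{i < j} J i j · t i · t j + ∑_i h i · t i ≥ ∑_{i < j < k} J i j · s i · s j + ∑_{i < k} h i · s i − ∑_{j ≥ k} |∑_{i < k} J i j · s i| + E'_sub(k). -/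
/-- The Hartwig–Daske–Kobe bound with external fields, where the fields are
kept in the lower-dimensional subproblems. -/
theorem hdk_bound_with_field_kept (n : ℕ) (J : Fin n → Fin n → ℝ)
    (h : Fin n → ℝ) (s : Fin n → ℝ) (hs : ∀ i, s i = -1 ∨ s i = 1)
    (k : ℕ) (hk : k ≤ n)
    (t : Fin n → ℝ) (ht : ∀ i, t i = -1 ∨ t i = 1)
    (hagree : ∀ i : Fin n, (i : ℕ) < k → t i = s i) :
    (∑ i : Fin n, ∑ j : Fin n, if i < j then J i j * t i * t j else 0) + ∑ i : Fin n, h i * t i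
      ≥ (∑ i : Fin n, ∑ j : Fin n, if (i : ℕ) < (j : ℕ) ∧ (j : ℕ) < k then J i j * s i * s j else 0)
        + (∑ i : Fin n, if (i : ℕ) < k then h i * s i else 0)
        - (∑ j : Fin n, if k ≤ (j : ℕ) then |∑ i : Fin n, if (i : ℕ) < k then J i j * s i else 0| else 0)
        + sInf {v : ℝ | ∃ u : Fin n → ℝ, (∀ i, u i = -1 ∨ u i = 1) ∧
            v = (∑ i : Fin n, ∑ j : Fin n, if k ≤ (i : ℕ) ∧ i < j then J i j * u i * u j else 0)
              + ∑ j : Fin n, if k ≤ (j : ℕ) then h j * u j else 0} := by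
  set S : Set ℝ := {v : ℝ | ∃ u : Fin n → ℝ, (∀ i, u i = -1 ∨ u i = 1) ∧
            v = (∑ i : Fin n, ∑ j : Fin n, if k ≤ (i : ℕ) ∧ i < j then J i j * u i * u j else 0)
              + ∑ j : Fin n, if k ≤ (j : ℕ) then h j * u j else 0} with hS
  -- S is finite, hence bounded below
  have hfin : S.Finite := by
    have hsub : S ⊆ (fun u : Fin n → ℝ =>
        (∑ i : Fin n, ∑ j : Fin n, if k ≤ (i : ℕ) ∧ i < j then J i j * u i * u j else 0)
          + ∑ j : Fin n, if k ≤ (j : ℕ) then h j * u j else 0) ''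
        (Set.pi Set.univ fun _ : Fin n => ({-1, 1} : Set ℝ)) := by
      rintro v ⟨u, hu, rfl⟩
      exact ⟨u, fun i _ => by rcases hu i with h' | h' <;> simp [h'], rfl⟩
    exact Set.Finite.subset (Set.Finite.image _
      (Set.Finite.pi fun _ => (Set.finite_singleton (1:ℝ)).insert (-1))) hsub
  have hbdd : BddBelow S := hfin.bddBelow
  have hmem : ((∑ i : Fin n, ∑ j : Fin n, if k ≤ (i : ℕ) ∧ i < j then J i j * t i * t j else 0)
      + ∑ j : Fin n, if k ≤ (j : ℕ) then h j * t j else 0) ∈ S := ⟨t, ht, rfl⟩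
  have hinf := csInf_le hbdd hmem
  -- split the pair sum
  have hsplit : (∑ i : Fin n, ∑ j : Fin n, if i < j then J i j * t i * t j else 0)
      = (∑ i : Fin n, ∑ j : Fin n, if (i : ℕ) < (j : ℕ) ∧ (j : ℕ) < k then J i j * t i * t j else 0)
      + (∑ i : Fin n, ∑ j : Fin n, if (i : ℕ) < k ∧ k ≤ (j : ℕ) then J i j * t i * t j else 0)
      + (∑ i : Fin n, ∑ j : Fin n, if k ≤ (i : ℕ) ∧ i < j then J i j * t i * t j else 0) := by
    rw [← Finset.sum_add_distrib, ← Finset.sum_add_distrib]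
    refine Finset.sum_congr rfl fun i _ => ?_
    rw [← Finset.sum_add_distrib, ← Finset.sum_add_distrib]
    refine Finset.sum_congr rfl fun j _ => ?_
    simp only [Fin.lt_def]
    split_ifs <;> first | omega | ring
  -- split the field sum
  have hfsplit : (∑ i : Fin n, h i * t i)
      = (∑ i : Fin n, if (i : ℕ) < k then h i * t i else 0)
      + (∑ j : Fin n, if k ≤ (j : ℕ) then h j * t j else 0) := by
    rw [← Finset.sum_add_distrib]
    refine Finset.sum_congr rfl fun i _ => ?_
    split_ifs <;> first | omega | ring
  -- replace t by s where indices < k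
  have hP1 : (∑ i : Fin n, ∑ j : Fin n, if (i : ℕ) < (j : ℕ) ∧ (j : ℕ) < k then J i j * t i * t j else 0)
      = ∑ i : Fin n, ∑ j : Fin n, if (i : ℕ) < (j : ℕ) ∧ (j : ℕ) < k then J i j * s i * s j else 0 := by
    refine Finset.sum_congr rfl fun i _ => Finset.sum_congr rfl fun j _ => ?_
    split_ifs with hc
    · rw [hagree i (lt_trans hc.1 hc.2), hagree j hc.2]
    · rfl
  have hH1 : (∑ i : Fin n, if (i : ℕ) < k then h i * t i else 0)
      = ∑ i : Fin n, if (i : ℕ) < k then h i * s i else 0 := by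
    refine Finset.sum_congr rfl fun i _ => ?_
    split_ifs with hc
    · rw [hagree i hc]
    · rfl
  -- bound the cross terms
  have hcross : (∑ i : Fin n, ∑ j : Fin n, if (i : ℕ) < k ∧ k ≤ (j : ℕ) then J i j * t i * t j else 0)
      ≥ -(∑ j : Fin n, if k ≤ (j : ℕ) then |∑ i : Fin n, if (i : ℕ) < k then J i j * s i else 0| else 0) := by
    rw [Finset.sum_comm, ge_iff_le, ← Finset.sum_neg_distrib]
    refine Finset.sum_le_sum fun j _ => ?_
    by_cases hj : k ≤ (j : ℕ)
    · have hin : (∑ i : Fin n, if (i : ℕ) < k ∧ k ≤ (j : ℕ) then J i j * t i * t j else 0)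
          = (∑ i : Fin n, if (i : ℕ) < k then J i j * s i else 0) * t j := by
        rw [Finset.sum_mul]
        refine Finset.sum_congr rfl fun i _ => ?_
        by_cases h1 : (i : ℕ) < k
        · rw [if_pos (⟨h1, hj⟩ : (i : ℕ) < k ∧ k ≤ (j : ℕ)), if_pos h1, hagree i h1]
        · rw [if_neg (fun hc => h1 hc.1), if_neg h1, zero_mul]
      rw [hin, if_pos hj]
      set c := ∑ i : Fin n, if (i : ℕ) < k then J i j * s i else 0
      rcases ht j with h' | h' <;> rw [h']
      · rw [mul_neg_one]
        exact neg_le_neg (le_abs_self c)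
      · rw [mul_one]
        exact neg_abs_le c
    · rw [if_neg hj, neg_zero]
      refine le_of_eq (Finset.sum_eq_zero fun i _ => ?_).symm
      rw [if_neg (fun hc => hj hc.2)]
  linarith [hinf, hsplit, hfsplit, hP1, hH1, hcross]
end
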